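/- arXiv:0706.0632 — 2 statements merged into one kernel-verified Lean document; each statement's English description precedes it below -/
import Mathlib

section
/- Let T = (ℂ^×)^n act on X = (ℂ^×)^l × ℂ^k × ℂ^l × ℂ^k (n = l + k) as in the model example, with quotient map π(θ, v, β, w) = (β, v₁w¹,…,v_kw^k) onto Y = ℂ^n. For a character χ = ∑ aᵢθᵢ + ∑ bⱼχⱼ ∈ ℤ^n (in the basis of characters dual to the action), the 𝒪(Y)-module 𝒪_χ = {f ∈ 𝒪(X) : t·f = χ(t) f for all t ∈ T} is free of rank 1, generated by (∏ᵢ θᵢ^{aᵢ}) · ∏ⱼ uⱼ^{|bⱼ|}, where uⱼ = vⱼ if bⱼ ≥ 0 and uⱼ = wʲ if bⱼ < 0. -/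
/-- Points of the ambient space of the model manifold `X = (ℂˣ)ˡ × ℂᵏ × ℂˡ × ℂᵏ`
(the condition `θᵢ ≠ 0` is imposed by membership in `modelSet`). -/
abbrev ModelSpace (l k : ℕ) :=
  (Fin l → ℂ) × (Fin k → ℂ) × (Fin l → ℂ) × (Fin k → ℂ)

/-- The model manifold `X`: points with all `θᵢ ≠ 0`. -/
def modelSet (l k : ℕ) : Set (ModelSpace l k) := {x | ∀ i, x.1 i ≠ 0}

/-- The action of `T = (ℂˣ)ˡ × (ℂˣ)ᵏ`: `(s,t)·(θ,v,β,w) = (sθ, tv, β, t⁻¹w)`. -/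
def modelAct (l k : ℕ) (g : (Fin l → ℂˣ) × (Fin k → ℂˣ)) (x : ModelSpace l k) :
    ModelSpace l k :=
  (fun i => (g.1 i : ℂ) * x.1 i, fun j => (g.2 j : ℂ) * x.2.1 j, x.2.2.1,
    fun j => ((g.2 j)⁻¹ : ℂˣ) * x.2.2.2 j)

/-- The quotient map `π(θ,v,β,w) = (β, v₁w¹,…,v_k wᵏ)` onto `Y = ℂˡ × ℂᵏ`. -/
def modelQuot (l k : ℕ) (x : ModelSpace l k) : (Fin l → ℂ) × (Fin k → ℂ) :=
  (x.2.2.1, fun j => x.2.1 j * x.2.2.2 j)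

/-- The character `χ = ∑ aᵢθᵢ + ∑ bⱼχⱼ` of `T`. -/
noncomputable def modelChar (l k : ℕ) (a : Fin l → ℤ) (b : Fin k → ℤ)
    (g : (Fin l → ℂˣ) × (Fin k → ℂˣ)) : ℂ :=
  (∏ i, (g.1 i : ℂ) ^ a i) * ∏ j, (g.2 j : ℂ) ^ b j

/-- The generator `(∏ θᵢ^{aᵢ}) · ∏ uⱼ^{|bⱼ|}` where `uⱼ = vⱼ` if `bⱼ ≥ 0` and
`uⱼ = wʲ` otherwise. -/
noncomputable def modelGen (l k : ℕ) (a : Fin l → ℤ) (b : Fin k → ℤ)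
    (x : ModelSpace l k) : ℂ :=
  (∏ i, x.1 i ^ a i) *
    ∏ j, (if 0 ≤ b j then x.2.1 j ^ (b j).toNat else x.2.2.2 j ^ (-(b j)).toNat)

/-!
Over the locus where every `vⱼ` and `wʲ` is nonzero the torus acts transitively on each fibre
of `π`, and the section `s` of `π` (with `θ = 1` and `uⱼ = 1`) meets every fibre at a point where
the generator equals `1`; equivariance then forces `f = (f ∘ s ∘ π) · generator` there. This
locus is dense in `X`, so the identity extends to all of `X` by continuity. Conversely,
evaluating at `s y` shows that `h = f ∘ s` is the only possible coefficient.
-/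

open Set Filter Topology

theorem dense_setOf_forall_ne_zero (ι X : Type*) [TopologicalSpace X] [Zero X]
    [NeBot (𝓝[≠] (0 : X))] : Dense {v : ι → X | ∀ j, v j ≠ 0} := by
  simpa [Set.pi] using dense_pi (s := fun _ : ι => ({0}ᶜ : Set X)) univ
    fun _ _ => dense_compl_singleton 0

theorem differentiableOn_finsetProd {𝕜 E 𝔸 ι : Type*} [NontriviallyNormedField 𝕜]
    [NormedAddCommGroup E] [NormedSpace 𝕜 E] [NormedCommRing 𝔸] [NormedAlgebra 𝕜 𝔸]
    {u : Finset ι} {f : ι → E → 𝔸} {s : Set E} (hf : ∀ i ∈ u, DifferentiableOn 𝕜 (f i) s) :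
    DifferentiableOn 𝕜 (fun x => ∏ i ∈ u, f i x) s := by
  classical
  exact fun x hx => (HasFDerivWithinAt.finsetProd fun i hi =>
    (hf i hi x hx).hasFDerivWithinAt).differentiableWithinAt

noncomputable def modelSection (l k : ℕ) (b : Fin k → ℤ)
    (y : (Fin l → ℂ) × (Fin k → ℂ)) : ModelSpace l k :=
  (fun _ => 1, fun j => if 0 ≤ b j then 1 else y.2 j, y.1,
    fun j => if 0 ≤ b j then y.2 j else 1)

def modelGenericSet (l k : ℕ) : Set (ModelSpace l k) :=
  {x | (∀ j, x.2.1 j ≠ 0) ∧ ∀ j, x.2.2.2 j ≠ 0}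

section

variable (l k : ℕ) (a : Fin l → ℤ) (b : Fin k → ℤ)

theorem isOpen_modelSet : IsOpen (modelSet l k) := by
  have : modelSet l k = ⋂ i, (fun x : ModelSpace l k => x.1 i) ⁻¹' {0}ᶜ := by
    ext x; simp [modelSet]
  rw [this]
  exact isOpen_iInter_of_finite fun i => isOpen_compl_singleton.preimage (by fun_prop)

theorem continuous_modelQuot : Continuous (modelQuot l k) := by
  unfold modelQuot; fun_prop

theorem modelSection_mem_modelSet (y : (Fin l → ℂ) × (Fin k → ℂ)) :
    modelSection l k b y ∈ modelSet l k :=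
  fun _ => one_ne_zero

theorem modelQuot_modelSection (y : (Fin l → ℂ) × (Fin k → ℂ)) :
    modelQuot l k (modelSection l k b y) = y := by
  refine Prod.ext rfl (funext fun j => ?_)
  by_cases hb : 0 ≤ b j <;> simp [modelQuot, modelSection, hb]

theorem modelGen_modelSection (y : (Fin l → ℂ) × (Fin k → ℂ)) :
    modelGen l k a b (modelSection l k b y) = 1 := by
  simp only [modelGen, modelSection, one_zpow, Finset.prod_const_one, one_mul]
  refine Finset.prod_eq_one fun j _ => ?_
  by_cases hb : 0 ≤ b j <;> simp [hb]

theorem differentiable_modelSection : Differentiable ℂ (modelSection l k b) := by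
  refine .prodMk (by fun_prop) (.prodMk ?_ (.prodMk (by fun_prop) ?_)) <;>
  · refine differentiable_pi.mpr fun j => ?_
    split_ifs <;> fun_prop

theorem differentiableOn_modelGen :
    DifferentiableOn ℂ (modelGen l k a b) (modelSet l k) := by
  refine .mul (differentiableOn_finsetProd fun i _ => ?_)
    (differentiableOn_finsetProd fun j _ => ?_)
  · exact DifferentiableOn.zpow (by fun_prop) (.inl fun x hx => hx i)
  · split_ifs <;> fun_prop

theorem dense_modelGenericSet : Dense (modelGenericSet l k) := by
  have hne := dense_setOf_forall_ne_zero (Fin k) ℂ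
  convert (dense_univ (X := Fin l → ℂ)).prod (hne.prod ((dense_univ (X := Fin l → ℂ)).prod hne))
    using 1
  ext x
  simp [modelGenericSet]

theorem modelGen_modelAct (g : (Fin l → ℂˣ) × (Fin k → ℂˣ)) (x : ModelSpace l k) :
    modelGen l k a b (modelAct l k g x) = modelChar l k a b g * modelGen l k a b x := by
  simp only [modelGen, modelAct, modelChar]
  rw [mul_mul_mul_comm, ← Finset.prod_mul_distrib, ← Finset.prod_mul_distrib]
  congr 1
  · exact Finset.prod_congr rfl fun i _ => mul_zpow _ _ _
  · refine Finset.prod_congr rfl fun j _ => ?_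
    split_ifs with hb
    · rw [mul_pow, ← zpow_natCast, Int.toNat_of_nonneg hb]
    · rw [mul_pow, ← zpow_natCast, Int.toNat_of_nonneg (by omega), Units.val_inv_eq_inv_val,
        inv_zpow', neg_neg]

theorem exists_modelAct_modelSection_eq {x : ModelSpace l k} (hx : x ∈ modelSet l k)
    (hgen : x ∈ modelGenericSet l k) :
    ∃ g, modelAct l k g (modelSection l k b (modelQuot l k x)) = x := by
  refine ⟨(fun i => Units.mk0 _ (hx i), fun j =>
    if 0 ≤ b j then Units.mk0 _ (hgen.1 j) else (Units.mk0 _ (hgen.2 j))⁻¹), ?_⟩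
  refine Prod.ext (funext fun i => ?_)
    (Prod.ext (funext fun j => ?_) (Prod.ext rfl (funext fun j => ?_)))
  · simp [modelAct, modelSection]
  · by_cases hb : 0 ≤ b j <;> simp [modelAct, modelSection, modelQuot, hb]
    field_simp [hgen.2 j]
  · by_cases hb : 0 ≤ b j <;> simp [modelAct, modelSection, modelQuot, hb]
    field_simp [hgen.1 j]

variable {l k a b}

theorem eq_mul_modelGen_of_mem_modelGenericSet {f : ModelSpace l k → ℂ}
    (hequiv : ∀ g : (Fin l → ℂˣ) × (Fin k → ℂˣ), ∀ x ∈ modelSet l k,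
      f (modelAct l k g x) = modelChar l k a b g * f x)
    {x : ModelSpace l k} (hx : x ∈ modelSet l k) (hgen : x ∈ modelGenericSet l k) :
    f x = f (modelSection l k b (modelQuot l k x)) * modelGen l k a b x := by
  obtain ⟨g, hg⟩ := exists_modelAct_modelSection_eq l k b hx hgen
  have hf := hequiv g _ (modelSection_mem_modelSet l k b (modelQuot l k x))
  have hgenx := modelGen_modelAct l k a b g (modelSection l k b (modelQuot l k x))
  rw [hg] at hf hgenx
  rw [hf, hgenx, modelGen_modelSection, mul_one, mul_comm]

theorem differentiable_comp_modelSection {f : ModelSpace l k → ℂ}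
    (hf : DifferentiableOn ℂ f (modelSet l k)) :
    Differentiable ℂ fun y => f (modelSection l k b y) := fun y =>
  (hf.differentiableAt ((isOpen_modelSet l k).mem_nhds (modelSection_mem_modelSet l k b y))).comp
    y (differentiable_modelSection l k b y)

theorem eq_mul_modelGen {f : ModelSpace l k → ℂ} (hf : DifferentiableOn ℂ f (modelSet l k))
    (hequiv : ∀ g : (Fin l → ℂˣ) × (Fin k → ℂˣ), ∀ x ∈ modelSet l k,
      f (modelAct l k g x) = modelChar l k a b g * f x) :
    ∀ x ∈ modelSet l k, f x = f (modelSection l k b (modelQuot l k x)) * modelGen l k a b x := by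
  refine EqOn.of_subset_closure (fun x hx => eq_mul_modelGen_of_mem_modelGenericSet hequiv
    hx.1 hx.2) hf.continuousOn ?_ inter_subset_left
    ((dense_modelGenericSet l k).open_subset_closure_inter (isOpen_modelSet l k))
  exact ((differentiable_comp_modelSection hf).continuous.comp
    (continuous_modelQuot l k)).continuousOn.mul (differentiableOn_modelGen l k a b).continuousOn

theorem eq_comp_modelSection_of_forall_eq_mul {f : ModelSpace l k → ℂ}
    {h : (Fin l → ℂ) × (Fin k → ℂ) → ℂ}
    (hh : ∀ x ∈ modelSet l k, f x = h (modelQuot l k x) * modelGen l k a b x) :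
    h = fun y => f (modelSection l k b y) := funext fun y => by
  simpa [modelQuot_modelSection, modelGen_modelSection] using
    (hh _ (modelSection_mem_modelSet l k b y)).symm

end

/-- for the model manifold `X` with quotient `π : X → Y = ℂⁿ` and a
character `χ = ∑ aᵢθᵢ + ∑ bⱼχⱼ`, the `𝒪(Y)`-module
`𝒪_χ = {f holomorphic on X : f(g·x) = χ(g) f(x)}` is free of rank 1, generated by
`(∏ θᵢ^{aᵢ}) · ∏ uⱼ^{|bⱼ|}`: the generator lies in `𝒪_χ`, and every `f ∈ 𝒪_χ` is
uniquely of the form `(h ∘ π) ·` generator with `h` holomorphic on `Y`. -/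
theorem stmt14 (l k : ℕ) (a : Fin l → ℤ) (b : Fin k → ℤ) :
    (DifferentiableOn ℂ (modelGen l k a b) (modelSet l k) ∧
      ∀ g : (Fin l → ℂˣ) × (Fin k → ℂˣ), ∀ x ∈ modelSet l k,
        modelGen l k a b (modelAct l k g x) = modelChar l k a b g * modelGen l k a b x) ∧
    (∀ f : ModelSpace l k → ℂ,
      DifferentiableOn ℂ f (modelSet l k) →
      (∀ g : (Fin l → ℂˣ) × (Fin k → ℂˣ), ∀ x ∈ modelSet l k,
        f (modelAct l k g x) = modelChar l k a b g * f x) →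
      ∃! h : (Fin l → ℂ) × (Fin k → ℂ) → ℂ,
        Differentiable ℂ h ∧
        ∀ x ∈ modelSet l k, f x = h (modelQuot l k x) * modelGen l k a b x) :=
  ⟨⟨differentiableOn_modelGen l k a b, fun g x _ => modelGen_modelAct l k a b g x⟩,
    fun _ hf hequiv => ⟨_, ⟨differentiable_comp_modelSection hf, eq_mul_modelGen hf hequiv⟩,
      fun _ hh => eq_comp_modelSection_of_forall_eq_mul hh.2⟩⟩
end

section
/- In the model manifold X = (ℂ^×)^l × ℂ^k × ℂ^l × ℂ^k with T = (ℂ^×)^{l+k} acting by (s,t)·(θ,v,β,w) = (sθ, tv, β, t^{-1}w): the stabilizer of a point (θ, v, β, w) is trivial if and only if for each j = 1,…,k, at least one of vⱼ, wʲ is nonzero; and the open set {x : vⱼ(x) ≠ 0 for all j} meets each fiber of π(θ,v,β,w) = (β, v₁w¹,…,v_kw^k) in exactly one T-orbit. -/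
/-
The action only rescales coordinates, so `g` fixes `x` exactly when each scaling factor is `1`
wherever the coordinate it scales is nonzero. Since all `θᵢ ≠ 0`, the stabilizer is trivial iff
no `j` has `vⱼ = wʲ = 0`; for such a `j`, scaling `(vⱼ, wʲ)` by `(2, 1/2)` fixes `x`.
When all `vⱼ ≠ 0`, the element `(θ⁻¹, v⁻¹)` moves `x` to `(1, 1, β, v w)`, which depends only on
`π x`; hence the fiber of `π` over `y` meets `{vⱼ ≠ 0}` in the orbit of `(1, 1, y)`.
-/

namespace ModelSpace

variable {l k : ℕ}

theorem modelAct_eq_self_iff (g : (Fin l → ℂˣ) × (Fin k → ℂˣ)) (x : ModelSpace l k) :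
    modelAct l k g x = x ↔
      (∀ i, g.1 i = 1 ∨ x.1 i = 0) ∧ ∀ j, g.2 j = 1 ∨ x.2.1 j = 0 ∧ x.2.2.2 j = 0 := by
  simp only [modelAct, Prod.ext_iff, funext_iff, mul_left_eq_self₀, Units.val_eq_one, inv_eq_one,
    true_and, ← forall_and, ← or_and_left]

theorem stabilizer_trivial_iff {x : ModelSpace l k} (hx : x ∈ modelSet l k) :
    (∀ g : (Fin l → ℂˣ) × (Fin k → ℂˣ), modelAct l k g x = x → g = 1) ↔
      ∀ j, x.2.1 j ≠ 0 ∨ x.2.2.2 j ≠ 0 := by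
  simp only [modelAct_eq_self_iff]
  constructor
  · intro h j
    by_contra! hvw
    let u : ℂˣ := Units.mk0 2 two_ne_zero
    have hu : u ≠ 1 := fun h => by norm_num [u, Units.ext_iff] at h
    let t : Fin k → ℂˣ := Pi.mulSingle j u
    have hfix := h (1, t)
      ⟨fun _ => .inl rfl, fun j' => by
        rcases eq_or_ne j' j with rfl | hj
        · exact .inr hvw
        · exact .inl (Pi.mulSingle_eq_of_ne (M := fun _ => ℂˣ) hj u)⟩
    exact hu (Pi.mulSingle_eq_one_iff (M := fun _ => ℂˣ).mp (congrArg Prod.snd hfix))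
  · rintro h g ⟨hθ, hvw⟩
    refine Prod.ext (funext fun i => (hθ i).resolve_right (hx i)) (funext fun j => ?_)
    exact (hvw j).resolve_right fun ⟨hv, hw⟩ => (h j).elim (· hv) (· hw)

def normalForm (y : (Fin l → ℂ) × (Fin k → ℂ)) : ModelSpace l k := (1, 1, y.1, y.2)

theorem normalForm_mem_modelSet (y : (Fin l → ℂ) × (Fin k → ℂ)) :
    normalForm y ∈ modelSet l k :=
  fun _ => one_ne_zero

theorem modelQuot_normalForm (y : (Fin l → ℂ) × (Fin k → ℂ)) :
    modelQuot l k (normalForm y) = y := by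
  simp [modelQuot, normalForm]

theorem modelAct_eq_normalForm {x : ModelSpace l k} (hx : x ∈ modelSet l k)
    (hv : ∀ j, x.2.1 j ≠ 0) :
    modelAct l k (fun i => (Units.mk0 _ (hx i))⁻¹, fun j => (Units.mk0 _ (hv j))⁻¹) x =
      normalForm (modelQuot l k x) := by
  simp [modelAct, normalForm, modelQuot, hx _, hv _, ← Pi.one_def]

end ModelSpace

open ModelSpace in
/-- in the model manifold, (1) the stabilizer of a point `x` is trivial
iff for each `j` at least one of `vⱼ(x), wʲ(x)` is nonzero; and (2) the open set
`{x : vⱼ(x) ≠ 0 for all j}` meets each fiber of `π` in exactly one `T`-orbit. -/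
theorem stmt16 (l k : ℕ) :
    (∀ x ∈ modelSet l k,
      ((∀ g : (Fin l → ℂˣ) × (Fin k → ℂˣ), modelAct l k g x = x → g = 1)
        ↔ ∀ j, x.2.1 j ≠ 0 ∨ x.2.2.2 j ≠ 0)) ∧
    (∀ y : (Fin l → ℂ) × (Fin k → ℂ),
      ∃ x ∈ modelSet l k, (∀ j, x.2.1 j ≠ 0) ∧ modelQuot l k x = y ∧
        ∀ x' ∈ modelSet l k, (∀ j, x'.2.1 j ≠ 0) → modelQuot l k x' = y →
          ∃ g : (Fin l → ℂˣ) × (Fin k → ℂˣ), modelAct l k g x' = x) := by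
  refine ⟨fun x hx => stabilizer_trivial_iff hx, fun y => ?_⟩
  refine ⟨normalForm y, normalForm_mem_modelSet y, fun _ => one_ne_zero, modelQuot_normalForm y, ?_⟩
  rintro x' hx' hv' rfl
  exact ⟨_, modelAct_eq_normalForm hx' hv'⟩
end
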